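/- Let p > 2, q = p/(p-1), and identify ℝ² with ℂ. For f, g ∈ ℂ with ∂_ζ Q the complex Wirtinger-type derivative (∂_ζ = (∂_{ζ₁} - i∂_{ζ₂})/2) of the Nazarov–Treil function Q, one has 2 Re[∂_ζ Q(f,g) · f] ≥ p|f|^p and 2 Re[∂_η Q(f,g) · g] ≥ q|g|^q. -/

import Mathlib

noncomputable section
open Real Matrix

def qexp (p : ℝ) : ℝ := p / (p - 1)

/-- The Nazarov–Treil Bellman function on `ℂ × ℂ ≅ ℝ² × ℝ²`. -/
def Q (p δ : ℝ) (ζ η : ℂ) : ℝ :=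
  if ‖ζ‖ ^ p ≤ ‖η‖ ^ qexp p then
    ‖ζ‖ ^ p + ‖η‖ ^ qexp p +
      δ * (‖ζ‖ ^ (2 : ℝ) * ‖η‖ ^ (2 - qexp p))
  else
    ‖ζ‖ ^ p + ‖η‖ ^ qexp p +
      δ * ((2 / p) * ‖ζ‖ ^ p + (2 / qexp p - 1) * ‖η‖ ^ qexp p)

/-- Coordinate directions in `ℂ ≅ ℝ²`. -/
def dir : Fin 2 → ℂ := ![1, Complex.I]

/-- Partial derivative of `Q` in the `i`-th coordinate of the `ζ` variable. -/
def dζ (p δ : ℝ) (i : Fin 2) (ζ η : ℂ) : ℝ :=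
  deriv (fun t : ℝ => Q p δ (ζ + (t : ℂ) * dir i) η) 0

/-- Partial derivative of `Q` in the `i`-th coordinate of the `η` variable. -/
def dη (p δ : ℝ) (i : Fin 2) (ζ η : ℂ) : ℝ :=
  deriv (fun t : ℝ => Q p δ ζ (η + (t : ℂ) * dir i)) 0

/-- Wirtinger derivative `∂_ζ Q = (∂_{ζ₁}Q - i ∂_{ζ₂}Q)/2`. -/
def Wζ (p δ : ℝ) (ζ η : ℂ) : ℂ :=
  ((dζ p δ 0 ζ η : ℂ) - Complex.I * (dζ p δ 1 ζ η : ℂ)) / 2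

/-- Wirtinger derivative `∂_η Q = (∂_{η₁}Q - i ∂_{η₂}Q)/2`. -/
def Wη (p δ : ℝ) (ζ η : ℂ) : ℂ :=
  ((dη p δ 0 ζ η : ℂ) - Complex.I * (dη p δ 1 ζ η : ℂ)) / 2

/-!
`Q` depends on `ζ` and `η` only through `s = |ζ|` and `r = |η|`, and for such a radial function
`2 Re[∂_ζ Q · ζ] = s ∂_s Q` and `2 Re[∂_η Q · η] = r ∂_r Q`. Differentiating the two branches gives
`s ∂_s Q - p s^p ∈ {2δ s² r^(2-q), 2δ s^p}` and `r ∂_r Q - q r^q ∈ {δ(2-q) s² r^(2-q), δ(2-q) r^q}`,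
all nonnegative since `q ≤ 2`. On the interface `s^p = r^q` we have `r = s^(p-1)`, hence
`s² r^(2-q) = s^p = r^q` (the equality case of Young's inequality): the branches agree there to
first order, so the one-variable profiles are differentiable across it.
-/
open Asymptotics
open scoped RealInnerProductSpace

section IteDeriv

variable {𝕜 : Type*} [NontriviallyNormedField 𝕜] {E F : Type*} [NormedAddCommGroup E]
  [NormedSpace 𝕜 E] [NormedAddCommGroup F] [NormedSpace 𝕜 F]

theorem HasFDerivAt.of_forall_eq_or_eq {f g h : E → F} {f' : E →L[𝕜] F} {x : E}
    (hf : HasFDerivAt f f' x) (hg : HasFDerivAt g f' x) (hfx : h x = f x) (hgx : h x = g x)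
    (hfg : ∀ y, h y = f y ∨ h y = g y) : HasFDerivAt h f' x := by
  rw [hasFDerivAt_iff_isLittleO] at *
  refine (isBigO_of_le _ fun y => ?_).trans_isLittleO (hf.norm_left.add hg.norm_left)
  rw [Real.norm_of_nonneg (by positivity)]
  rcases hfg y with hy | hy
  · rw [hy, hfx]; exact le_add_of_nonneg_right (norm_nonneg _)
  · rw [hy, hgx]; exact le_add_of_nonneg_left (norm_nonneg _)

theorem HasDerivAt.ite_le {u v : 𝕜 → ℝ} {A B : 𝕜 → F} {a b : F} {x : 𝕜}
    (hA : HasDerivAt A a x) (hB : HasDerivAt B b x) (hu : ContinuousAt u x)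
    (hv : ContinuousAt v x) (hAB : u x = v x → A x = B x ∧ a = b) :
    HasDerivAt (fun y => if u y ≤ v y then A y else B y) (if u x ≤ v x then a else b) x := by
  rcases lt_trichotomy (u x) (v x) with hlt | heq | hgt
  · rw [if_pos hlt.le]
    exact hA.congr_of_eventuallyEq <| (hu.eventually_lt hv hlt).mono fun y hy => if_pos hy.le
  · obtain ⟨hABx, rfl⟩ := hAB heq
    rw [if_pos heq.le, hasDerivAt_iff_hasFDerivAt] at *
    exact hA.of_forall_eq_or_eq hB (if_pos heq.le) (by rw [if_pos heq.le, hABx])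
      fun y => by split_ifs <;> simp
  · rw [if_neg hgt.not_ge]
    exact hB.congr_of_eventuallyEq <| (hv.eventually_lt hu hgt).mono fun y hy => if_neg hy.not_ge

end IteDeriv

theorem HasDerivAt.comp_norm_add_smul {E : Type*} [NormedAddCommGroup E] [InnerProductSpace ℝ E]
    {F : ℝ → ℝ} {d : ℝ} {z : E} (e : E) (hz : z ≠ 0) (hF : HasDerivAt F d ‖z‖) :
    HasDerivAt (fun t : ℝ => F ‖z + t • e‖) (d * (⟪z, e⟫ / ‖z‖)) 0 := by
  have hline : HasDerivAt (fun t : ℝ => z + t • e) e 0 := by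
    simpa using ((hasDerivAt_id (0 : ℝ)).smul_const e).const_add z
  have hnorm : HasDerivAt (fun t : ℝ => ‖z + t • e‖) (⟪z, e⟫ / ‖z‖) 0 := by
    convert hline.norm_sq.sqrt (by simpa using hz) using 1
    · simp
    · simp [mul_div_mul_left]
  exact hF.comp_of_eq 0 hnorm (by simp)

theorem Complex.two_mul_re_wirtinger_mul (a b : ℝ) (z : ℂ) :
    2 * (((a : ℂ) - Complex.I * b) / 2 * z).re = a * z.re + b * z.im := by
  simp [Complex.mul_re]
  ring

theorem two_mul_re_wirtinger_mul_of_radial {F : ℝ → ℝ} {d : ℝ} {z : ℂ} (hz : z ≠ 0)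
    (hF : HasDerivAt F d ‖z‖) :
    2 * ((((deriv (fun t : ℝ => F ‖z + t * dir 0‖) 0 : ℝ) : ℂ) -
      Complex.I * ((deriv (fun t : ℝ => F ‖z + t * dir 1‖) 0 : ℝ) : ℂ)) / 2 * z).re =
      ‖z‖ * d := by
  have hpartial (i : Fin 2) : deriv (fun t : ℝ => F ‖z + t * dir i‖) 0 =
      d * (⟪z, dir i⟫ / ‖z‖) := by
    simpa only [Complex.real_smul] using (hF.comp_norm_add_smul (dir i) hz).deriv
  have hz' : ‖z‖ ≠ 0 := norm_ne_zero_iff.2 hz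
  have hre : ⟪z, dir 0⟫ = z.re := by simp [dir, Complex.inner]
  have him : ⟪z, dir 1⟫ = z.im := by simp [dir, Complex.inner]
  rw [Complex.two_mul_re_wirtinger_mul, hpartial, hpartial, hre, him]
  field_simp
  rw [Complex.sq_norm, Complex.normSq_apply]
  ring

section Radial

variable {p q δ : ℝ}

/-- The profile of `Q`: `Q p δ ζ η` unfolds to `Qrad p (qexp p) δ ‖ζ‖ ‖η‖`. -/
def Qrad (p q δ s r : ℝ) : ℝ :=
  if s ^ p ≤ r ^ q then
    s ^ p + r ^ q + δ * (s ^ (2 : ℝ) * r ^ (2 - q))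
  else
    s ^ p + r ^ q + δ * ((2 / p) * s ^ p + (2 / q - 1) * r ^ q)

namespace Real.HolderConjugate

variable {s r : ℝ} (hpq : p.HolderConjugate q) (hs : 0 ≤ s) (hr : 0 ≤ r) (h : s ^ p = r ^ q)
include hpq hs hr h

theorem rpow_sub_one_eq_of_rpow_eq : s ^ (p - 1) = r := by
  rw [← Real.rpow_left_inj (Real.rpow_nonneg hs _) hr hpq.symm.ne_zero, ← Real.rpow_mul hs,
    hpq.sub_one_mul_conj, h]

theorem rpow_two_mul_rpow_two_sub_eq_of_rpow_eq : s ^ (2 : ℝ) * r ^ (2 - q) = s ^ p := by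
  have hexp : 2 + (p - 1) * (2 - q) = p := by linear_combination -hpq.mul_eq_add
  rw [← hpq.rpow_sub_one_eq_of_rpow_eq hs hr h, ← Real.rpow_mul hs,
    ← Real.rpow_add' hs (by rw [hexp]; exact hpq.ne_zero), hexp]

end Real.HolderConjugate

theorem exists_hasDerivAt_Qrad_left (hpq : p.HolderConjugate q) (hδ : 0 ≤ δ) {s r : ℝ}
    (hs : 0 < s) (hr : 0 ≤ r) :
    ∃ d, HasDerivAt (fun s => Qrad p q δ s r) d s ∧ p * s ^ p ≤ s * d := by
  have hp0 := hpq.ne_zero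
  have hP := Real.hasDerivAt_rpow_const (x := s) (p := p) (Or.inl hs.ne')
  have h2 := Real.hasDerivAt_rpow_const (x := s) (p := 2) (Or.inl hs.ne')
  have hA := (hP.add_const (r ^ q)).add ((h2.mul_const (r ^ (2 - q))).const_mul δ)
  have hB := (hP.add_const (r ^ q)).add
    (((hP.const_mul (2 / p)).add_const ((2 / q - 1) * r ^ q)).const_mul δ)
  refine ⟨_, hA.ite_le hB hP.continuousAt continuousAt_const fun hb => ?_, ?_⟩
  · have hY := hpq.rpow_two_mul_rpow_two_sub_eq_of_rpow_eq hs.le hr hb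
    have hpq' := hpq.inv_add_inv_eq_one
    simp only [Pi.add_apply]
    constructor
    · rw [hY, ← hb]
      linear_combination (-2 * δ * s ^ p) * hpq'
    · rw [Real.rpow_sub_one hs.ne' p, Real.rpow_sub_one hs.ne' 2]
      field_simp
      linear_combination (2 * δ) * hY
  · rw [Real.rpow_sub_one hs.ne' p, Real.rpow_sub_one hs.ne' 2]
    split_ifs
    · field_simp
      have : 0 ≤ r ^ (2 - q) := Real.rpow_nonneg hr _
      exact le_add_of_nonneg_right (by positivity)
    · field_simp
      rw [mul_div_cancel_left₀ _ hp0]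
      linarith

theorem exists_hasDerivAt_Qrad_right (hpq : p.HolderConjugate q) (hq : q ≤ 2) (hδ : 0 ≤ δ)
    {s r : ℝ} (hs : 0 ≤ s) (hr : 0 < r) :
    ∃ d, HasDerivAt (fun r => Qrad p q δ s r) d r ∧ q * r ^ q ≤ r * d := by
  have hq0 := hpq.symm.ne_zero
  have hQ := Real.hasDerivAt_rpow_const (x := r) (p := q) (Or.inl hr.ne')
  have h2q := Real.hasDerivAt_rpow_const (x := r) (p := 2 - q) (Or.inl hr.ne')
  have hA := (hQ.const_add (s ^ p)).add ((h2q.const_mul (s ^ (2 : ℝ))).const_mul δ)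
  have hB := (hQ.const_add (s ^ p)).add
    (((hQ.const_mul (2 / q - 1)).const_add (2 / p * s ^ p)).const_mul δ)
  refine ⟨_, hA.ite_le hB continuousAt_const hQ.continuousAt fun hb => ?_, ?_⟩
  · have hY := hpq.rpow_two_mul_rpow_two_sub_eq_of_rpow_eq hs hr.le hb
    have hpq' := hpq.inv_add_inv_eq_one
    simp only [Pi.add_apply]
    constructor
    · rw [hY, ← hb]
      linear_combination (-2 * δ * s ^ p) * hpq'
    · rw [Real.rpow_sub_one hr.ne' q, Real.rpow_sub_one hr.ne' (2 - q)]
      field_simp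
      linear_combination (δ * (2 - q)) * hY + (δ * (2 - q)) * hb
  · rw [Real.rpow_sub_one hr.ne' q, Real.rpow_sub_one hr.ne' (2 - q)]
    have : 0 ≤ 2 - q := by linarith
    split_ifs
    · field_simp
      exact le_add_of_nonneg_right (by positivity)
    · field_simp
      rw [mul_div_cancel_left₀ _ hq0]
      linarith [mul_nonneg hδ this]

end Radial

theorem stmt9 (p δ : ℝ) (hp : 2 < p) (hδ : 0 < δ) (f g : ℂ) :
    p * ‖f‖ ^ p ≤ 2 * (Wζ p δ f g * f).re ∧
    qexp p * ‖g‖ ^ qexp p ≤ 2 * (Wη p δ f g * g).re := by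
  have hpq : p.HolderConjugate (qexp p) := .conjExponent (by linarith)
  have hq : qexp p ≤ 2 := by
    rw [qexp, div_le_iff₀ (by linarith)]
    linarith
  constructor
  · rcases eq_or_ne f 0 with rfl | hf
    · simp [Real.zero_rpow hpq.ne_zero]
    obtain ⟨d, hd, hle⟩ :=
      exists_hasDerivAt_Qrad_left hpq hδ.le (norm_pos_iff.2 hf) (norm_nonneg g)
    exact hle.trans_eq (two_mul_re_wirtinger_mul_of_radial hf hd).symm
  · rcases eq_or_ne g 0 with rfl | hg
    · simp [Real.zero_rpow hpq.symm.ne_zero]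
    obtain ⟨d, hd, hle⟩ :=
      exists_hasDerivAt_Qrad_right hpq hq hδ.le (norm_nonneg f) (norm_pos_iff.2 hg)
    exact hle.trans_eq (two_mul_re_wirtinger_mul_of_radial hg hd).symm
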